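/- arXiv:2010.05505 — 3 statements merged into one kernel-verified Lean document; each statement's English description precedes it below -/
import Mathlib

section
/- For all integers m ≥ 0 and n ≥ 1 and every real z with 0 ≤ z < 1, one has ∑_{a > m} (1/a)·C(a,n;z) = m! (n−1)!/(m+n)! · F(m+1, n; m+n+1; z), where the sum is over integers a > m. -/
/-- The rising factorial (Pochhammer symbol) (a)_n = a(a+1)⋯(a+n−1). -/
noncomputable def risingFactorial (a : ℝ) (n : ℕ) : ℝ := ∏ i ∈ Finset.range n, (a + i)

/-- The Gauss hypergeometric series F(α,β;γ;z) = ∑_{n≥0} (α)_n (β)_n / ((γ)_n n!) · zⁿ. -/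
noncomputable def F (α β γ z : ℝ) : ℝ :=
  ∑' n : ℕ, risingFactorial α n * risingFactorial β n /
    (risingFactorial γ n * (n.factorial : ℝ)) * z ^ n

/-- The connector C(m,n;z) = m! n!/(m+n)! · F(m, n; m+n+1; z). -/
noncomputable def C (m n : ℕ) (z : ℝ) : ℝ :=
  (m.factorial : ℝ) * n.factorial / (m + n).factorial * F m n (m + n + 1) z

/-!
Write `n = p + 1`. For natural parameters every rising factorial is a quotient of factorials, and
the `k`-th coefficient of `(1/a) C(a,n;z)` becomes `n · (a+k-1)!/(a+k+n)! · (p+k)!/k!`. Since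
`n · j!/(j+n+1)! = j!/(j+n)! - (j+1)!/(j+n+1)!`, the sum of these coefficients over `a > m`
telescopes to `(m+k)!/(m+k+n)! · (p+k)!/k!`, the `k`-th coefficient of the right-hand side. All
terms are nonnegative and the right-hand side converges for `0 ≤ z < 1`, so the two summations may
be interchanged.
-/

open Filter Topology Nat

lemma hasSum_sub_succ_of_antitone {f : ℕ → ℝ} (hf : Antitone f) (h0 : Tendsto f atTop (𝓝 0)) :
    HasSum (fun i => f i - f (i + 1)) (f 0) := by
  rw [hasSum_iff_tendsto_nat_of_nonneg fun i => sub_nonneg.mpr (hf i.le_succ)]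
  simp_rw [Finset.sum_range_sub']
  simpa using (tendsto_const_nhds (x := f 0)).sub h0

lemma tsum_comm_of_nonneg {α β : Type*} {T : α → β → ℝ} (hT : ∀ a b, 0 ≤ T a b)
    (hcol : ∀ b, Summable fun a => T a b) (hsum : Summable fun b => ∑' a, T a b) :
    ∑' a, ∑' b, T a b = ∑' b, ∑' a, T a b :=
  Summable.tsum_comm ((summable_prod_of_nonneg fun _ => hT _ _).mpr ⟨hcol, hsum⟩)

lemma tsum_subtype_lt {M : Type*} [AddCommMonoid M] [TopologicalSpace M] (m : ℕ) (f : ℕ → M) :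
    ∑' a : {a : ℕ // m < a}, f a = ∑' b : ℕ, f (b + (m + 1)) :=
  ((show ℕ ≃ {a : ℕ // m < a} from
    { toFun := fun b => ⟨b + (m + 1), by omega⟩
      invFun := fun a => a - (m + 1)
      left_inv := fun b => Nat.add_sub_cancel b (m + 1)
      right_inv := fun a => Subtype.ext (Nat.sub_add_cancel a.2) }).tsum_eq fun a => f a).symm

lemma risingFactorial_natCast_add_one (c k : ℕ) :
    risingFactorial ((c : ℝ) + 1) k = (c + k)! / c ! := by
  rw [eq_div_iff (by positivity), ← Nat.factorial_mul_ascFactorial, Nat.ascFactorial_eq_prod_range]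
  unfold risingFactorial
  push_cast
  ring

lemma F_natCast_add_one (A B G : ℕ) (z : ℝ) :
    F ((A : ℝ) + 1) ((B : ℝ) + 1) ((G : ℝ) + 1) z
      = ∑' k : ℕ, ((A + k)! * (B + k)! * G ! / (A ! * B ! * (G + k)! * k !) : ℝ) * z ^ k := by
  refine tsum_congr fun k => ?_
  simp only [risingFactorial_natCast_add_one]
  field_simp

noncomputable def factorialRatio (n j : ℕ) : ℝ := (j ! : ℝ) / (j + n)!

lemma factorialRatio_nonneg (n j : ℕ) : 0 ≤ factorialRatio n j := by
  unfold factorialRatio; positivity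

lemma factorialRatio_sub_succ (n j : ℕ) :
    factorialRatio n j - factorialRatio n (j + 1) = n * factorialRatio (n + 1) j := by
  unfold factorialRatio
  rw [show j + 1 + n = j + n + 1 by omega, show j + (n + 1) = j + n + 1 by omega,
    Nat.factorial_succ (j + n), Nat.factorial_succ j]
  push_cast
  field_simp
  ring

lemma factorialRatio_antitone (n : ℕ) : Antitone (factorialRatio n) :=
  antitone_nat_of_succ_le fun j => sub_nonneg.mp <| by
    rw [factorialRatio_sub_succ]; exact mul_nonneg n.cast_nonneg (factorialRatio_nonneg _ _)

lemma factorialRatio_le_one_div_succ {n : ℕ} (hn : 1 ≤ n) (j : ℕ) :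
    factorialRatio n j ≤ 1 / (j + 1) := by
  calc factorialRatio n j ≤ (j ! : ℝ) / (j + 1)! :=
        div_le_div_of_nonneg_left (by positivity) (by positivity)
          (by exact_mod_cast Nat.factorial_le (by omega))
    _ = 1 / (j + 1) := by
        rw [Nat.factorial_succ]; push_cast; field_simp

lemma tendsto_factorialRatio_atTop_zero {n : ℕ} (hn : 1 ≤ n) :
    Tendsto (factorialRatio n) atTop (𝓝 0) :=
  squeeze_zero (factorialRatio_nonneg n) (factorialRatio_le_one_div_succ hn)
    tendsto_one_div_add_atTop_nhds_zero_nat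

lemma hasSum_mul_factorialRatio_succ {n : ℕ} (hn : 1 ≤ n) (M : ℕ) :
    HasSum (fun b => n * factorialRatio (n + 1) (b + M)) (factorialRatio n M) := by
  have h := hasSum_sub_succ_of_antitone (f := fun b => factorialRatio n (b + M))
    (fun _ _ hab => factorialRatio_antitone n (by omega))
    ((tendsto_factorialRatio_atTop_zero hn).comp (tendsto_add_atTop_nat M))
  convert h using 1
  · funext b
    rw [show b + 1 + M = b + M + 1 by omega, factorialRatio_sub_succ]
  · rw [zero_add]

lemma factorialRatio_mul_le_one (p m k : ℕ) :
    factorialRatio (p + 1) (m + k) * ((p + k)! / k !) ≤ 1 := by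
  calc factorialRatio (p + 1) (m + k) * ((p + k)! / k !)
      ≤ factorialRatio (p + 1) k * ((p + k)! / k !) :=
        mul_le_mul_of_nonneg_right (factorialRatio_antitone _ (by omega)) (by positivity)
    _ = 1 / (k + p + 1) := by
        unfold factorialRatio
        rw [show k + (p + 1) = (p + k) + 1 by omega, Nat.factorial_succ]
        push_cast
        field_simp
        ring
    _ ≤ 1 := by
        rw [div_le_one (by positivity)]; linarith [k.cast_nonneg (α := ℝ), p.cast_nonneg (α := ℝ)]

lemma one_div_mul_C_succ (c p : ℕ) (z : ℝ) :
    1 / ((c + 1 : ℕ) : ℝ) * C (c + 1) (p + 1) z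
      = ∑' k : ℕ, (p + 1) * factorialRatio (p + 2) (c + k) * ((p + k)! / k ! * z ^ k) := by
  unfold C
  have hG : ((c + 1 : ℕ) : ℝ) + ((p + 1 : ℕ) : ℝ) + 1 = ((c + p + 2 : ℕ) : ℝ) + 1 := by
    push_cast; ring
  rw [hG, Nat.cast_succ c, Nat.cast_succ p, F_natCast_add_one, ← tsum_mul_left, ← tsum_mul_left]
  refine tsum_congr fun k => ?_
  unfold factorialRatio
  rw [show c + 1 + (p + 1) = c + p + 2 by omega, show c + k + (p + 2) = c + p + 2 + k by omega,
    Nat.factorial_succ c, Nat.factorial_succ p]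
  push_cast
  field_simp

lemma factorial_mul_div_mul_F (m p : ℕ) (z : ℝ) :
    (m ! : ℝ) * p ! / (m + (p + 1))! * F (m + 1) (p + 1) (m + (p + 1) + 1) z
      = ∑' k : ℕ, factorialRatio (p + 1) (m + k) * ((p + k)! / k ! * z ^ k) := by
  have hG : (m : ℝ) + (p + 1) + 1 = ((m + p + 1 : ℕ) : ℝ) + 1 := by push_cast; ring
  rw [hG, F_natCast_add_one, ← tsum_mul_left]
  refine tsum_congr fun k => ?_
  unfold factorialRatio
  rw [show m + (p + 1) = m + p + 1 by omega, show m + k + (p + 1) = m + p + 1 + k by omega]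
  field_simp

lemma hasSum_connector_coeff (m p k : ℕ) (z : ℝ) :
    HasSum (fun b => (p + 1) * factorialRatio (p + 2) (b + m + k) * ((p + k)! / k ! * z ^ k))
      (factorialRatio (p + 1) (m + k) * ((p + k)! / k ! * z ^ k)) := by
  have h := (hasSum_mul_factorialRatio_succ (n := p + 1) (by omega) (m + k)).mul_right
    ((p + k)! / k ! * z ^ k)
  push_cast at h
  simpa only [add_assoc] using h

lemma summable_connector_coeff (m p : ℕ) {z : ℝ} (hz0 : 0 ≤ z) (hz1 : z < 1) :
    Summable fun k => factorialRatio (p + 1) (m + k) * ((p + k)! / k ! * z ^ k) := by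
  refine .of_nonneg_of_le (fun k => ?_) (fun k => ?_) (summable_geometric_of_lt_one hz0 hz1)
  · have := factorialRatio_nonneg (p + 1) (m + k)
    positivity
  · rw [← mul_assoc]
    exact mul_le_of_le_one_left (by positivity) (factorialRatio_mul_le_one p m k)

/-- ∑_{a>m} (1/a)·C(a,n;z) = m!(n−1)!/(m+n)! · F(m+1,n;m+n+1;z) for n ≥ 1. -/
theorem connector_sum_eval' (m n : ℕ) (hn : 1 ≤ n) (z : ℝ) (hz0 : 0 ≤ z) (hz1 : z < 1) :
    ∑' a : {a : ℕ // m < a}, 1 / (a : ℝ) * C a n z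
      = (m.factorial : ℝ) * (n - 1).factorial / (m + n).factorial *
        F (m + 1) n (m + n + 1) z := by
  obtain ⟨p, rfl⟩ : ∃ p, n = p + 1 := ⟨n - 1, by omega⟩
  rw [Nat.add_sub_cancel]
  push_cast
  rw [tsum_subtype_lt m fun a => 1 / (a : ℝ) * C a (p + 1) z, factorial_mul_div_mul_F]
  calc _ = ∑' b : ℕ, ∑' k : ℕ,
          (p + 1) * factorialRatio (p + 2) (b + m + k) * ((p + k)! / k ! * z ^ k) :=
        tsum_congr fun b => one_div_mul_C_succ (b + m) p z
    _ = ∑' k : ℕ, ∑' b : ℕ,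
          (p + 1) * factorialRatio (p + 2) (b + m + k) * ((p + k)! / k ! * z ^ k) :=
        tsum_comm_of_nonneg
          (fun b k => by have := factorialRatio_nonneg (p + 2) (b + m + k); positivity)
          (fun k => (hasSum_connector_coeff m p k z).summable)
          ((summable_connector_coeff m p hz0 hz1).congr
            fun k => (hasSum_connector_coeff m p k z).tsum_eq.symm)
    _ = _ := tsum_congr fun k => (hasSum_connector_coeff m p k z).tsum_eq
end

section
/- For all integers m, n ≥ 0 and every real z with 0 ≤ z < 1, one has the symmetric connector identity ∑_{a > m} (z^{a−m}/a)·C(a,n;z) = ∑_{b > n} (z^{b−n}/b)·C(m,b;z), where the sums are over integers a > m and b > n respectively. -/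
/-!
Write `a = m + 1 + j` and expand `C(a, n; z)` as a power series `∑ₖ`: the left-hand side becomes
a double series of nonnegative terms. On the antidiagonal `j + k = p` these terms differ only
through the factor `n.multichoose k`, and the hockey-stick identity `∑_{k ≤ p} n.multichoose k =
(n + p).choose n` collapses the antidiagonal to `z^(p+1) (m+p)! (n+p)! / (p! (m+n+p+1)!)`, which is
symmetric in `m` and `n`. This diagonal sum is at most `z^(p+1)`, which justifies the regrouping.
-/

open Finset

theorem risingFactorial_natCast (a k : ℕ) : risingFactorial a k = a.ascFactorial k := by
  simp [risingFactorial, Nat.ascFactorial_eq_prod_range]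

theorem C_comm (a b : ℕ) (z : ℝ) : C a b z = C b a z := by
  unfold C F
  rw [Nat.add_comm a b, add_comm (a : ℝ) b]
  congr 1
  · ring
  · exact tsum_congr fun k => by ring

theorem tsum_subtype_lt_eq_tsum_add {α : Type*} [AddCommMonoid α] [TopologicalSpace α]
    (m : ℕ) (g : ℕ → α) : ∑' a : {a : ℕ // m < a}, g a = ∑' j, g (m + 1 + j) := by
  let e : ℕ ≃ {a : ℕ // m < a} :=
    { toFun j := ⟨m + 1 + j, by omega⟩
      invFun a := a - (m + 1)
      left_inv j := by simp
      right_inv a := Subtype.ext (by have := a.2; simp; omega) }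
  exact (e.tsum_eq fun a => g a).symm

theorem tsum_tsum_eq_tsum_sum_antidiagonal_of_nonneg {f : ℕ × ℕ → ℝ} (hf : 0 ≤ f)
    (h : Summable fun p => ∑ x ∈ antidiagonal p, f x) :
    ∑' j, ∑' k, f (j, k) = ∑' p, ∑ x ∈ antidiagonal p, f x := by
  have hσ : Summable (f ∘ HasAntidiagonal.sigmaAntidiagonalEquivProd) := by
    refine (summable_sigma_of_nonneg fun _ => hf _).2 ⟨fun _ => (hasSum_fintype _).summable, ?_⟩
    simpa only [Function.comp_apply, HasAntidiagonal.sigmaAntidiagonalEquivProd_apply,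
      Finset.tsum_subtype] using h
  rw [← (HasAntidiagonal.sigmaAntidiagonalEquivProd.summable_iff.1 hσ).tsum_prod,
    ← HasAntidiagonal.sigmaAntidiagonalEquivProd.tsum_eq]
  exact hσ.tsum_sigma.trans (tsum_congr fun p => Finset.tsum_subtype _ f)

open Nat in
theorem Nat.factorial_add_mul_factorial_add_le (m n p : ℕ) :
    (m + p)! * (n + p)! ≤ p ! * (m + n + p)! := by
  have hp := add_choose_mul_factorial_mul_factorial p m
  have hnp := add_choose_mul_factorial_mul_factorial (n + p) m
  calc (m + p)! * (n + p)! = (p + m).choose m * m ! * p ! * (n + p)! := by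
        rw [add_comm m p, ← hp]; ring
    _ ≤ (n + p + m).choose m * m ! * p ! * (n + p)! := by
        gcongr ?_ * _ * _ * _; exact choose_le_choose m (by omega)
    _ = p ! * (m + n + p)! := by rw [show m + n + p = n + p + m by ring, ← hnp]; ring

noncomputable def connectorSummand (m n : ℕ) (z : ℝ) (x : ℕ × ℕ) : ℝ :=
  z ^ (x.1 + x.2 + 1) * ((m + x.1 + x.2).factorial * n.factorial * n.multichoose x.2) /
    (m + n + x.1 + x.2 + 1).factorial

theorem connectorSummand_nonneg (m n : ℕ) {z : ℝ} (hz : 0 ≤ z) :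
    0 ≤ connectorSummand m n z :=
  fun _ => by unfold connectorSummand; positivity

theorem pow_div_mul_C_eq_tsum (m n j : ℕ) (z : ℝ) :
    z ^ (j + 1) / (m + 1 + j : ℕ) * C (m + 1 + j) n z =
      ∑' k, connectorSummand m n z (j, k) := by
  unfold C F
  rw [← tsum_mul_left, ← tsum_mul_left]
  refine tsum_congr fun k => ?_
  have ha : (m + 1 + j).factorial = (m + 1 + j) * (m + j).factorial := by
    rw [show m + 1 + j = m + j + 1 by ring, Nat.factorial_succ]
  have hak : (m + j).factorial * (m + 1 + j).ascFactorial k = (m + j + k).factorial := by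
    rw [show m + 1 + j = m + j + 1 by ring]
    exact Nat.factorial_mul_ascFactorial _ _
  have hak' : (m + 1 + j + n).factorial * (m + 1 + j + n + 1).ascFactorial k =
      (m + n + j + k + 1).factorial := by
    rw [Nat.factorial_mul_ascFactorial]; congr 1; ring
  have hn : n.ascFactorial k = k.factorial * n.multichoose k := by
    rw [Nat.ascFactorial_eq_factorial_mul_choose', Nat.multichoose_eq]
  rw [show ((m + 1 + j : ℕ) : ℝ) + n + 1 = ((m + 1 + j + n + 1 : ℕ) : ℝ) by push_cast; ring]
  simp only [connectorSummand, risingFactorial_natCast]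
  rw [ha, hn, ← hak, ← hak']
  push_cast
  field_simp
  ring

noncomputable def connectorDiagonal (m n : ℕ) (z : ℝ) (p : ℕ) : ℝ :=
  z ^ (p + 1) * ((m + p).factorial * (n + p).factorial) / (p.factorial * (m + n + p + 1).factorial)

theorem connectorDiagonal_comm (m n : ℕ) (z : ℝ) :
    connectorDiagonal m n z = connectorDiagonal n m z := by
  ext p
  unfold connectorDiagonal
  rw [add_comm n m]
  ring

theorem connectorDiagonal_le (m n p : ℕ) {z : ℝ} (hz : 0 ≤ z) :
    connectorDiagonal m n z p ≤ z ^ (p + 1) := by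
  unfold connectorDiagonal
  rw [div_le_iff₀ (by positivity)]
  refine mul_le_mul_of_nonneg_left ?_ (by positivity)
  exact_mod_cast (Nat.factorial_add_mul_factorial_add_le m n p).trans
    (Nat.mul_le_mul_left _ (Nat.factorial_le (by omega)))

theorem sum_antidiagonal_connectorSummand (m n p : ℕ) (z : ℝ) :
    ∑ x ∈ antidiagonal p, connectorSummand m n z x = connectorDiagonal m n z p := by
  have hterm : ∀ x ∈ antidiagonal p, connectorSummand m n z x =
      z ^ (p + 1) * (m + p).factorial * n.factorial / (m + n + p + 1).factorial *
        n.multichoose x.2 := by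
    rintro ⟨j, k⟩ hjk
    rw [HasAntidiagonal.mem_antidiagonal] at hjk
    subst hjk
    unfold connectorSummand
    ring_nf
  rw [sum_congr rfl hterm, ← mul_sum, ← Nat.cast_sum, ← Nat.sum_antidiagonal_swap]
  simp only [Prod.snd_swap]
  rw [Nat.sum_antidiagonal_eq_sum_range_succ fun k _ => n.multichoose k, Nat.sum_range_multichoose,
    connectorDiagonal, add_comm n p, ← Nat.add_choose_mul_factorial_mul_factorial p n]
  push_cast
  field_simp

theorem tsum_pow_div_mul_C_eq_tsum_connectorDiagonal (m n : ℕ) {z : ℝ} (hz0 : 0 ≤ z)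
    (hz1 : z < 1) :
    ∑' a : {a : ℕ // m < a}, z ^ ((a : ℕ) - m) / (a : ℕ) * C a n z =
      ∑' p, connectorDiagonal m n z p := by
  have hshift (j : ℕ) : m + 1 + j - m = j + 1 := by omega
  rw [tsum_subtype_lt_eq_tsum_add m (fun a => z ^ (a - m) / (a : ℝ) * C a n z)]
  simp only [hshift, pow_div_mul_C_eq_tsum]
  rw [tsum_tsum_eq_tsum_sum_antidiagonal_of_nonneg (connectorSummand_nonneg m n hz0)]
  · exact tsum_congr (sum_antidiagonal_connectorSummand m n · z)
  simp only [sum_antidiagonal_connectorSummand]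
  refine .of_nonneg_of_le (fun p => by unfold connectorDiagonal; positivity)
    (fun p => (connectorDiagonal_le m n p hz0).trans_eq (pow_succ' z p))
    ((summable_geometric_of_lt_one hz0 hz1).mul_left z)

/-- The symmetric connector identity
∑_{a>m} (z^{a−m}/a)·C(a,n;z) = ∑_{b>n} (z^{b−n}/b)·C(m,b;z). -/
theorem connector_symmetry (m n : ℕ) (z : ℝ) (hz0 : 0 ≤ z) (hz1 : z < 1) :
    ∑' a : {a : ℕ // m < a}, z ^ ((a : ℕ) - m) / (a : ℕ) * C a n z
      = ∑' b : {b : ℕ // n < b}, z ^ ((b : ℕ) - n) / (b : ℕ) * C m b z := by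
  simp only [C_comm m, tsum_pow_div_mul_C_eq_tsum_connectorDiagonal _ _ hz0 hz1,
    connectorDiagonal_comm m n]
end

section
/- Let 0 < q < 1, let α, β, γ be complex numbers with 1 − q^k γ ≠ 0 for all integers k ≥ 0, and let z be complex with |z| < 1. Then the q-hypergeometric series satisfies the contiguous relation φ_q(α,β;γ;qz) = φ_q(α,qβ;γ;z) − z·((1−α)/(1−γ))·φ_q(qα,qβ;qγ;z). -/
/-!
Comparing coefficients of z^{n+1}, the difference of the first two series is
(α;q)_{n+1} z^{n+1} / ((γ;q)_{n+1} (q;q)_{n+1}) · ((qβ;q)_{n+1} − q^{n+1} (β;q)_{n+1}),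
and the bracket equals (qβ;q)_n (1 − q^{n+1}). The factor 1 − q^{n+1} cancels against the last
factor of (q;q)_{n+1}, and peeling the first factors off (α;q)_{n+1} and (γ;q)_{n+1} leaves
z (1 − α)/(1 − γ) times the n-th term of φ_q(qα,qβ;qγ;z). All three series converge for |z| < 1
by the ratio test, since the ratio of consecutive terms tends to z.
-/

/-- The q-shifted factorial (a;q)_n = (1−a)(1−qa)⋯(1−q^{n−1}a). -/
noncomputable def qPoch (q a : ℂ) (n : ℕ) : ℂ := ∏ i ∈ Finset.range n, (1 - q ^ i * a)

/-- The q-hypergeometric series φ_q(α,β;γ;z) = ∑_{n≥0} (α;q)_n (β;q)_n / ((γ;q)_n (q;q)_n) · zⁿ. -/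
noncomputable def qHyp (q α β γ z : ℂ) : ℂ :=
  ∑' n : ℕ, qPoch q α n * qPoch q β n / (qPoch q γ n * qPoch q q n) * z ^ n

section Series

variable {E : Type*} [AddCommGroup E] [TopologicalSpace E] [IsTopologicalAddGroup E] [T2Space E]

theorem tsum_eq_tsum_sub_tsum_of_sub_succ {a b c : ℕ → E} (ha : Summable a) (hb : Summable b)
    (h₀ : a 0 = b 0) (h : ∀ n, b (n + 1) - a (n + 1) = c n) :
    ∑' n, a n = ∑' n, b n - ∑' n, c n := by
  have hsub : ∑' n, b n - ∑' n, a n = ∑' n, c n := by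
    rw [← hb.tsum_sub ha, (hb.sub ha).tsum_eq_zero_add]
    simp only [h, h₀, sub_self, zero_add]
  rw [← hsub, sub_sub_cancel]

end Series

section QPochhammer

variable (q a : ℂ) (n : ℕ)

theorem qPoch_zero : qPoch q a 0 = 1 := Finset.prod_range_zero _

theorem qPoch_succ : qPoch q a (n + 1) = qPoch q a n * (1 - q ^ n * a) :=
  Finset.prod_range_succ _ _

theorem qPoch_succ' : qPoch q a (n + 1) = (1 - a) * qPoch q (q * a) n := by
  rw [qPoch, Finset.prod_range_succ', pow_zero, one_mul, mul_comm]
  exact congrArg _ (Finset.prod_congr rfl fun i _ => by ring)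

end QPochhammer

noncomputable def qHypTerm (q α β γ z : ℂ) (n : ℕ) : ℂ :=
  qPoch q α n * qPoch q β n / (qPoch q γ n * qPoch q q n) * z ^ n

section QHypergeometric

open Filter Topology

variable {q α β γ z : ℂ}

theorem qHypTerm_succ (n : ℕ) :
    qHypTerm q α β γ z (n + 1) = qHypTerm q α β γ z n *
      ((1 - q ^ n * α) * (1 - q ^ n * β) / ((1 - q ^ n * γ) * (1 - q ^ n * q)) * z) := by
  simp only [qHypTerm, qPoch_succ, pow_succ, div_eq_mul_inv, mul_inv]
  ring

theorem summable_qHypTerm (hq : ‖q‖ < 1) (hz : ‖z‖ < 1) : Summable (qHypTerm q α β γ z) := by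
  have hfactor (a : ℂ) : Tendsto (fun n => 1 - q ^ n * a) atTop (𝓝 1) := by
    simpa using tendsto_const_nhds.sub ((tendsto_pow_atTop_nhds_zero_of_norm_lt_one hq).mul_const a)
  have hratio : Tendsto (fun n =>
      (1 - q ^ n * α) * (1 - q ^ n * β) / ((1 - q ^ n * γ) * (1 - q ^ n * q)) * z) atTop (𝓝 z) := by
    simpa using
      (((hfactor α).mul (hfactor β)).div ((hfactor γ).mul (hfactor q)) (by norm_num)).mul_const z
  obtain ⟨r, hzr, hr1⟩ := exists_between hz
  refine summable_of_ratio_norm_eventually_le hr1 ?_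
  filter_upwards [hratio.norm.eventually_le_const hzr] with n hn
  rw [qHypTerm_succ, norm_mul, mul_comm]
  exact mul_le_mul_of_nonneg_right hn (norm_nonneg _)

theorem qHypTerm_succ_sub_qHypTerm_succ (n : ℕ) (hq : 1 - q ^ (n + 1) ≠ 0) :
    qHypTerm q α (q * β) γ z (n + 1) - qHypTerm q α β γ (q * z) (n + 1)
      = z * ((1 - α) / (1 - γ)) * qHypTerm q (q * α) (q * β) (q * γ) z n := by
  calc _ = z * ((1 - α) / (1 - γ)) * qHypTerm q (q * α) (q * β) (q * γ) z n
        * ((1 - q ^ (n + 1)) * (1 - q ^ (n + 1))⁻¹) := by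
        simp only [qHypTerm, qPoch_succ' q α, qPoch_succ' q β, qPoch_succ' q γ,
          qPoch_succ q (q * β), qPoch_succ q q, div_eq_mul_inv, mul_inv]
        ring
    _ = _ := by rw [mul_inv_cancel₀ hq, mul_one]

theorem one_sub_pow_succ_ne_zero (hq : ‖q‖ < 1) (n : ℕ) : 1 - q ^ (n + 1) ≠ 0 := by
  rw [sub_ne_zero]
  intro h
  have : ‖q ^ (n + 1)‖ < 1 := by
    rw [norm_pow]
    exact pow_lt_one₀ (norm_nonneg q) hq n.succ_ne_zero
  simp [← h] at this

theorem qHyp_contiguous (hq : ‖q‖ < 1) (hz : ‖z‖ < 1) :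
    qHyp q α β γ (q * z)
      = qHyp q α (q * β) γ z - z * ((1 - α) / (1 - γ)) * qHyp q (q * α) (q * β) (q * γ) z := by
  have hqz : ‖q * z‖ < 1 := by
    rw [norm_mul]
    exact lt_of_le_of_lt (mul_le_of_le_one_left (norm_nonneg z) hq.le) hz
  change ∑' n, qHypTerm q α β γ (q * z) n = ∑' n, qHypTerm q α (q * β) γ z n
    - z * ((1 - α) / (1 - γ)) * ∑' n, qHypTerm q (q * α) (q * β) (q * γ) z n
  rw [← tsum_mul_left]
  refine tsum_eq_tsum_sub_tsum_of_sub_succ (summable_qHypTerm hq hqz) (summable_qHypTerm hq hz)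
    (by simp [qHypTerm, qPoch_zero]) fun n => ?_
  exact qHypTerm_succ_sub_qHypTerm_succ n (one_sub_pow_succ_ne_zero hq n)

end QHypergeometric

theorem qHyp_contiguous_three_general (q : ℝ) (hq0 : 0 < q) (hq1 : q < 1) (α β γ z : ℂ)
    (hz : ‖z‖ < 1) :
    qHyp q α β γ (q * z)
      = qHyp q α (q * β) γ z
        - z * ((1 - α) / (1 - γ)) * qHyp q (q * α) (q * β) (q * γ) z := by
  refine qHyp_contiguous ?_ hz
  rwa [Complex.norm_real, Real.norm_of_nonneg hq0.le]

/-- Contiguous relation: φ_q(α,β;γ;qz) = φ_q(α,qβ;γ;z) − z·((1−α)/(1−γ))·φ_q(qα,qβ;qγ;z). -/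
theorem qHyp_contiguous_three (q : ℝ) (hq0 : 0 < q) (hq1 : q < 1) (α β γ z : ℂ)
    (hγ : ∀ k : ℕ, (1 : ℂ) - (q : ℂ) ^ k * γ ≠ 0) (hz : ‖z‖ < 1) :
    qHyp q α β γ (q * z)
      = qHyp q α (q * β) γ z
        - z * ((1 - α) / (1 - γ)) * qHyp q (q * α) (q * β) (q * γ) z :=
  qHyp_contiguous_three_general q hq0 hq1 α β γ z hz
end
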